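/- Sum generation lemma: if Γ ⊢ t + r : S is derivable in λ^vec, then there exist types T and R with S ≡ T + R such that Γ ⊢ t : T and Γ ⊢ r : R are derivable. -/

import Mathlib

/-!
Formalization of the vectorial λ-calculus (Arrighi, Díaz-Caro, Valiron):
syntax of types and terms, type equivalence, typing rules, reduction, etc.
-/

universe u

/-- Types of λ^vec. Type variables come in two kinds, tagged by a `Bool`:
`true` for unit type variables 𝕌, `false` for general type variables 𝕏.
`fa b n U` is ∀X.U where X is the variable of kind `b` with index `n`. -/
inductive VType (S : Type u) : Type u where
  | uvar : ℕ → VType S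
  | gvar : ℕ → VType S
  | arrow : VType S → VType S → VType S
  | fa : Bool → ℕ → VType S → VType S
  | smul : S → VType S → VType S
  | add : VType S → VType S → VType S

namespace VType

variable {S : Type u}

/-- Unit types: U ::= 𝕌 | U → T | ∀𝕌.U | ∀𝕏.U -/
inductive IsUnit : VType S → Prop where
  | uvar (n : ℕ) : IsUnit (uvar n)
  | arrow {U T : VType S} : IsUnit U → IsUnit (arrow U T)
  | fa {b : Bool} {n : ℕ} {U : VType S} : IsUnit U → IsUnit (fa b n U)

/-- 𝒰 ::= U | 𝕏 : a unit type or a general type variable. -/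
def IsUG (T : VType S) : Prop := IsUnit T ∨ ∃ n, T = gvar n

/-- Free type variables (as kind-index pairs). -/
def freeTV : VType S → Set (Bool × ℕ)
  | uvar n => {(true, n)}
  | gvar n => {(false, n)}
  | arrow U T => freeTV U ∪ freeTV T
  | fa b n U => freeTV U \ {(b, n)}
  | smul _ T => freeTV T
  | add T R => freeTV T ∪ freeTV R

/-- Substitution of the type variable `v` by the type `A`;
it distributes homomorphically through `smul` and `add`. -/
def substT : VType S → (Bool × ℕ) → VType S → VType S
  | uvar n, v, A => if v = (true, n) then A else uvar n
  | gvar n, v, A => if v = (false, n) then A else gvar n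
  | arrow U T, v, A => arrow (substT U v A) (substT T v A)
  | fa b n U, v, A => if v = (b, n) then fa b n U else fa b n (substT U v A)
  | smul a T, v, A => smul a (substT T v A)
  | add T R, v, A => add (substT T v A) (substT R v A)

/-- The kind condition: a unit variable may only be substituted by a unit type. -/
def kindOK (v : Bool × ℕ) (A : VType S) : Prop := v.1 = true → IsUnit A

/-- ∀X⃗.T for a vector of variables. -/
def faMany (Xs : List (Bool × ℕ)) (T : VType S) : VType S :=
  Xs.foldr (fun v T => fa v.1 v.2 T) T

/-- T[A⃗/X⃗] for vectors of variables and types. -/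
def substMany (T : VType S) (Xs : List (Bool × ℕ)) (As : List (VType S)) : VType S :=
  (Xs.zip As).foldl (fun T p => substT T p.1 p.2) T

/-- The linear combination Σᵢ αᵢ·Tᵢ of a list of scalar–type pairs.
(The value on the empty list is irrelevant junk; it is only used on
nonempty lists.) -/
def ssumL [CommRing S] : List (S × VType S) → VType S
  | [] => smul 0 (uvar 0)
  | [p] => smul p.1 p.2
  | p :: l => add (smul p.1 p.2) (ssumL l)

end VType

/-- Equivalence of types: the smallest congruence satisfying
1·T ≡ T, α·(β·T) ≡ (α×β)·T, α·T + α·R ≡ α·(T+R), α·T + β·T ≡ (α+β)·T,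
commutativity and associativity of +. -/
inductive TEq {S : Type u} [CommRing S] : VType S → VType S → Prop where
  | refl (T : VType S) : TEq T T
  | symm {T R : VType S} : TEq T R → TEq R T
  | trans {T R Q : VType S} : TEq T R → TEq R Q → TEq T Q
  | oneSmul (T : VType S) : TEq (VType.smul 1 T) T
  | smulSmul (a b : S) (T : VType S) :
      TEq (VType.smul a (VType.smul b T)) (VType.smul (a * b) T)
  | smulAdd (a : S) (T R : VType S) :
      TEq (VType.add (VType.smul a T) (VType.smul a R)) (VType.smul a (VType.add T R))
  | addSmul (a b : S) (T : VType S) :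
      TEq (VType.add (VType.smul a T) (VType.smul b T)) (VType.smul (a + b) T)
  | comm (T R : VType S) : TEq (VType.add T R) (VType.add R T)
  | assoc (T R Q : VType S) :
      TEq (VType.add T (VType.add R Q)) (VType.add (VType.add T R) Q)
  | arrowCong {U V T R : VType S} : TEq U V → TEq T R → TEq (VType.arrow U T) (VType.arrow V R)
  | faCong (b : Bool) (n : ℕ) {T R : VType S} : TEq T R → TEq (VType.fa b n T) (VType.fa b n R)
  | smulCong (a : S) {T R : VType S} : TEq T R → TEq (VType.smul a T) (VType.smul a R)
  | addCong {T T' R R' : VType S} :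
      TEq T T' → TEq R R' → TEq (VType.add T R) (VType.add T' R')

/-- Terms of λ^vec. -/
inductive VTerm (S : Type u) : Type u where
  | var : ℕ → VTerm S
  | lam : ℕ → VTerm S → VTerm S
  | app : VTerm S → VTerm S → VTerm S
  | zero : VTerm S
  | smul : S → VTerm S → VTerm S
  | add : VTerm S → VTerm S → VTerm S

namespace VTerm

variable {S : Type u}

/-- Basis terms: variables and λ-abstractions. -/
def IsBasis : VTerm S → Prop
  | var _ => True
  | lam _ _ => True
  | _ => False

/-- Free term variables. -/
def freeV : VTerm S → Set ℕ
  | var x => {x}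
  | lam x t => freeV t \ {x}
  | app t r => freeV t ∪ freeV r
  | zero => ∅
  | smul _ t => freeV t
  | add t r => freeV t ∪ freeV r

def ClosedTerm (t : VTerm S) : Prop := freeV t = ∅

/-- Capture-avoiding substitution of the basis term `b` for the variable `x`;
it distributes homomorphically through linear combinations. -/
def substV : VTerm S → ℕ → VTerm S → VTerm S
  | var y, x, b => if y = x then b else var y
  | lam y t, x, b => if y = x then lam y t else lam y (substV t x b)
  | app t r, x, b => app (substV t x b) (substV r x b)
  | zero, _, _ => zero
  | smul a t, x, b => smul a (substV t x b)
  | add t r, x, b => add (substV t x b) (substV r x b)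

end VTerm

/-- Typing contexts: partial assignments of (unit) types to term variables. -/
def Ctx (S : Type u) := ℕ → Option (VType S)

def Ctx.extend {S : Type u} (Γ : Ctx S) (x : ℕ) (U : VType S) : Ctx S :=
  fun y => if y = x then some U else Γ y

/-- Free type variables of a context. -/
def Ctx.freeTV {S : Type u} (Γ : Ctx S) : Set (Bool × ℕ) :=
  {v | ∃ x U, Γ x = some U ∧ v ∈ VType.freeTV U}

/-- Type substitution applied pointwise to a context. -/
def Ctx.substT {S : Type u} (Γ : Ctx S) (v : Bool × ℕ) (A : VType S) : Ctx S :=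
  fun x => (Γ x).map (fun U => VType.substT U v A)

/-- The typing rules of the vectorial type system:
(ax), (0_I), (→_I), (→_E), (∀_I), (∀_E), (α_I), (+_I), (≡). -/
inductive Typing {S : Type u} [CommRing S] : Ctx S → VTerm S → VType S → Prop where
  | ax {Γ : Ctx S} {x : ℕ} {U : VType S} :
      Γ x = some U → VType.IsUnit U → Typing Γ (VTerm.var x) U
  | zeroI {Γ : Ctx S} {t : VTerm S} {T : VType S} :
      Typing Γ t T → Typing Γ VTerm.zero (VType.smul 0 T)
  | arrI {Γ : Ctx S} {x : ℕ} {U : VType S} {t : VTerm S} {T : VType S} :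
      VType.IsUnit U → Typing (Γ.extend x U) t T →
      Typing Γ (VTerm.lam x t) (VType.arrow U T)
  | arrE {Γ : Ctx S} {t r : VTerm S} (U : VType S) (Xs : List (Bool × ℕ))
      (p : S × VType S) (ps : List (S × VType S))
      (q : S × List (VType S)) (qs : List (S × List (VType S))) :
      VType.IsUnit U →
      (∀ w ∈ q :: qs, w.2.length = Xs.length ∧
        ∀ pr ∈ Xs.zip w.2, VType.kindOK pr.1 pr.2) →
      Typing Γ t (VType.ssumL ((p :: ps).map
        (fun pi => (pi.1, VType.faMany Xs (VType.arrow U pi.2))))) →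
      Typing Γ r (VType.ssumL ((q :: qs).map
        (fun qj => (qj.1, VType.substMany U Xs qj.2)))) →
      Typing Γ (VTerm.app t r)
        (VType.ssumL ((p :: ps).flatMap (fun pi => (q :: qs).map
          (fun qj => (pi.1 * qj.1, VType.substMany pi.2 Xs qj.2)))))
  | faI {Γ : Ctx S} {t : VTerm S} (v : Bool × ℕ)
      (p : S × VType S) (ps : List (S × VType S)) :
      v ∉ Γ.freeTV →
      (∀ w ∈ p :: ps, VType.IsUnit w.2) →
      Typing Γ t (VType.ssumL (p :: ps)) →
      Typing Γ t (VType.ssumL ((p :: ps).map (fun w => (w.1, VType.fa v.1 v.2 w.2))))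
  | faE {Γ : Ctx S} {t : VTerm S} (v : Bool × ℕ) (A : VType S)
      (p : S × VType S) (ps : List (S × VType S)) :
      VType.kindOK v A →
      (∀ w ∈ p :: ps, VType.IsUnit w.2) →
      Typing Γ t (VType.ssumL ((p :: ps).map (fun w => (w.1, VType.fa v.1 v.2 w.2)))) →
      Typing Γ t (VType.ssumL ((p :: ps).map (fun w => (w.1, VType.substT w.2 v A))))
  | smulI {Γ : Ctx S} {t : VTerm S} {T : VType S} (a : S) :
      Typing Γ t T → Typing Γ (VTerm.smul a t) (VType.smul a T)
  | addI {Γ : Ctx S} {t r : VTerm S} {T R : VType S} :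
      Typing Γ t T → Typing Γ r R → Typing Γ (VTerm.add t r) (VType.add T R)
  | equiv {Γ : Ctx S} {t : VTerm S} {T R : VType S} :
      Typing Γ t T → TEq T R → Typing Γ t R

/-- AC equivalence of terms (associativity and commutativity of +,
as a congruence). -/
inductive ACEq {S : Type u} : VTerm S → VTerm S → Prop where
  | refl (t : VTerm S) : ACEq t t
  | symm {t r : VTerm S} : ACEq t r → ACEq r t
  | trans {t r u : VTerm S} : ACEq t r → ACEq r u → ACEq t u
  | comm (t r : VTerm S) : ACEq (VTerm.add t r) (VTerm.add r t)
  | assoc (t r u : VTerm S) :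
      ACEq (VTerm.add t (VTerm.add r u)) (VTerm.add (VTerm.add t r) u)
  | lamCong (x : ℕ) {t r : VTerm S} : ACEq t r → ACEq (VTerm.lam x t) (VTerm.lam x r)
  | appCong {t t' r r' : VTerm S} :
      ACEq t t' → ACEq r r' → ACEq (VTerm.app t r) (VTerm.app t' r')
  | smulCong (a : S) {t r : VTerm S} : ACEq t r → ACEq (VTerm.smul a t) (VTerm.smul a r)
  | addCong {t t' r r' : VTerm S} :
      ACEq t t' → ACEq r r' → ACEq (VTerm.add t r) (VTerm.add t' r')

/-- One-step reduction of λ^vec, labelled by a `Bool` which is `true`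
exactly when the underlying rule is a factorisation rule (Group F).
Reduction acts modulo AC of +, and is closed under contexts. -/
inductive Red {S : Type u} [CommRing S] : Bool → VTerm S → VTerm S → Prop where
  -- Group E
  | zeroSmul (t : VTerm S) : Red false (VTerm.smul 0 t) VTerm.zero
  | oneSmul (t : VTerm S) : Red false (VTerm.smul 1 t) t
  | smulZero (a : S) : Red false (VTerm.smul a VTerm.zero) VTerm.zero
  | smulSmul (a b : S) (t : VTerm S) :
      Red false (VTerm.smul a (VTerm.smul b t)) (VTerm.smul (a * b) t)
  | smulAdd (a : S) (t r : VTerm S) :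
      Red false (VTerm.smul a (VTerm.add t r)) (VTerm.add (VTerm.smul a t) (VTerm.smul a r))
  -- Group F
  | factor (a b : S) (t : VTerm S) :
      Red true (VTerm.add (VTerm.smul a t) (VTerm.smul b t)) (VTerm.smul (a + b) t)
  | factor1 (a : S) (t : VTerm S) :
      Red true (VTerm.add (VTerm.smul a t) t) (VTerm.smul (a + 1) t)
  | factor2 (t : VTerm S) : Red true (VTerm.add t t) (VTerm.smul (1 + 1) t)
  | addZero (t : VTerm S) : Red true (VTerm.add t VTerm.zero) t
  -- Group B
  | beta (x : ℕ) (t b : VTerm S) :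
      VTerm.IsBasis b → Red false (VTerm.app (VTerm.lam x t) b) (VTerm.substV t x b)
  -- Group A
  | appAddL (t r u : VTerm S) :
      Red false (VTerm.app (VTerm.add t r) u) (VTerm.add (VTerm.app t u) (VTerm.app r u))
  | appAddR (t r u : VTerm S) :
      Red false (VTerm.app t (VTerm.add r u)) (VTerm.add (VTerm.app t r) (VTerm.app t u))
  | appSmulL (a : S) (t r : VTerm S) :
      Red false (VTerm.app (VTerm.smul a t) r) (VTerm.smul a (VTerm.app t r))
  | appSmulR (a : S) (t r : VTerm S) :
      Red false (VTerm.app t (VTerm.smul a r)) (VTerm.smul a (VTerm.app t r))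
  | appZeroL (t : VTerm S) : Red false (VTerm.app VTerm.zero t) VTerm.zero
  | appZeroR (t : VTerm S) : Red false (VTerm.app t VTerm.zero) VTerm.zero
  -- contextual rules
  | smulCtx {f : Bool} {t r : VTerm S} (a : S) :
      Red f t r → Red f (VTerm.smul a t) (VTerm.smul a r)
  | addCtx {f : Bool} {t r : VTerm S} (u : VTerm S) :
      Red f t r → Red f (VTerm.add u t) (VTerm.add u r)
  | appCtxR {f : Bool} {t r : VTerm S} (u : VTerm S) :
      Red f t r → Red f (VTerm.app u t) (VTerm.app u r)
  | appCtxL {f : Bool} {t r : VTerm S} (u : VTerm S) :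
      Red f t r → Red f (VTerm.app t u) (VTerm.app r u)
  | lamCtx {f : Bool} {t r : VTerm S} (x : ℕ) :
      Red f t r → Red f (VTerm.lam x t) (VTerm.lam x r)
  -- reduction modulo AC of +
  | ac {f : Bool} {t t' r r' : VTerm S} :
      ACEq t t' → Red f t' r' → ACEq r' r → Red f t r

/-- One-step reduction (by any rule). -/
def Red1 {S : Type u} [CommRing S] (t r : VTerm S) : Prop := ∃ f, Red f t r

/-- Strong normalisation: every reduction sequence from `t` is finite. -/
def SN {S : Type u} [CommRing S] (t : VTerm S) : Prop :=
  Acc (fun a b : VTerm S => Red1 b a) t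

/-- Algebraic contexts F(t⃗) ::= tᵢ | F(t⃗)+G(t⃗) | α·F(t⃗) | 0. -/
inductive AlgCtx (S : Type u) : Type u where
  | idx : ℕ → AlgCtx S
  | add : AlgCtx S → AlgCtx S → AlgCtx S
  | smul : S → AlgCtx S → AlgCtx S
  | zero : AlgCtx S

/-- Filling an algebraic context with a list of terms. -/
def AlgCtx.fill {S : Type u} : AlgCtx S → List (VTerm S) → VTerm S
  | .idx i, ts => ts.getD i VTerm.zero
  | .add F G, ts => VTerm.add (F.fill ts) (G.fill ts)
  | .smul a F, ts => VTerm.smul a (F.fill ts)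
  | .zero, _ => VTerm.zero

/-- `t` is not a λ-abstraction. -/
def NotLam {S : Type u} : VTerm S → Prop
  | VTerm.lam _ _ => False
  | _ => True

/-- Closed neutral terms: closed, not an abstraction, and reducing to something. -/
def Neutral {S : Type u} [CommRing S] (t : VTerm S) : Prop :=
  VTerm.ClosedTerm t ∧ NotLam t ∧ ∃ r, Red1 t r

/-- Reducibility candidates: sets of closed terms satisfying RC1–RC4. -/
def IsRC {S : Type u} [CommRing S] (A : Set (VTerm S)) : Prop :=
  (∀ t ∈ A, VTerm.ClosedTerm t ∧ SN t) ∧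
  (∀ t ∈ A, ∀ r, Red1 t r → r ∈ A) ∧
  (∀ t, Neutral t → (∀ r, Red1 t r → r ∈ A) → t ∈ A) ∧
  VTerm.zero ∈ A

/-- The arrow operation on candidates: closure under RC3 and RC4 of the set of
closed `t` with (t)0 ∈ B and (t)b ∈ B for every basis term b ∈ A. -/
inductive arrowSet {S : Type u} [CommRing S] (A B : Set (VTerm S)) : VTerm S → Prop where
  | base {t : VTerm S} : VTerm.ClosedTerm t → VTerm.app t VTerm.zero ∈ B →
      (∀ b ∈ A, VTerm.IsBasis b → VTerm.app t b ∈ B) → arrowSet A B t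
  | neutral {t : VTerm S} : Neutral t → (∀ r, Red1 t r → arrowSet A B r) → arrowSet A B t
  | zero : arrowSet A B VTerm.zero

/-- The sum Σᵢ 𝒜ᵢ of a family of candidates: closure under CC, RC2 and RC3
of the set of algebraic combinations F(t⃗) of terms each in some 𝒜ᵢ. -/
inductive sumSet {S : Type u} [CommRing S] {ι : Type*} (As : ι → Set (VTerm S)) :
    VTerm S → Prop where
  | base (F : AlgCtx S) (ts : List (VTerm S)) :
      (∀ t ∈ ts, ∃ i, t ∈ As i) → sumSet As (F.fill ts)
  | red {t r : VTerm S} : sumSet As t → Red1 t r → sumSet As r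
  | neutral {t : VTerm S} : Neutral t → (∀ r, Red1 t r → sumSet As r) → sumSet As t
  | cc (F : AlgCtx S) (ts : List (VTerm S)) {t : VTerm S} :
      sumSet As (F.fill ts) → t ∈ ts → sumSet As t

/-- The order ⊒ on types (`TGe T R` means T ⊒ R): the smallest reflexive,
transitive, congruent relation with (α+β)·T ⊒ α·T + β·T' whenever some term
can be typed with both α·T and β·T', and T ⊒ T + 0·R. -/
inductive TGe {S : Type u} [CommRing S] : VType S → VType S → Prop where
  | refl (T : VType S) : TGe T T
  | trans {T R Q : VType S} : TGe T R → TGe R Q → TGe T Q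
  | factor {Γ : Ctx S} {t : VTerm S} {a b : S} {T T' : VType S} :
      Typing Γ (VTerm.smul a t) (VType.smul a T) →
      Typing Γ (VTerm.smul b t) (VType.smul b T') →
      TGe (VType.smul (a + b) T) (VType.add (VType.smul a T) (VType.smul b T'))
  | addZero (T R : VType S) : TGe T (VType.add T (VType.smul 0 R))
  | addCong (Q : VType S) {T R : VType S} : TGe T R → TGe (VType.add T Q) (VType.add R Q)
  | smulCong (a : S) {T R : VType S} : TGe T R → TGe (VType.smul a T) (VType.smul a R)
  | arrowCong (U : VType S) {T R : VType S} :
      TGe T R → TGe (VType.arrow U T) (VType.arrow U R)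
  | faCong (b : Bool) (n : ℕ) {T R : VType S} :
      TGe T R → TGe (VType.fa b n T) (VType.fa b n R)

/-- The single-variable relation T ≻^t_{X,Γ} R of Definition 4.3. -/
inductive StepOrd {S : Type u} [CommRing S] (Γ : Ctx S) (t : VTerm S) (X : Bool × ℕ) :
    VType S → VType S → Prop where
  | faI {T R : VType S} (l : List (S × VType S)) :
      l ≠ [] → (∀ p ∈ l, VType.IsUnit p.2) →
      X ∉ Γ.freeTV → Typing Γ t T → Typing Γ t R →
      TEq T (VType.ssumL l) →
      TEq R (VType.ssumL (l.map (fun p => (p.1, VType.fa X.1 X.2 p.2)))) →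
      StepOrd Γ t X T R
  | faE {T R : VType S} (l : List (S × VType S)) (A : VType S) :
      l ≠ [] → (∀ p ∈ l, VType.IsUnit p.2) → VType.kindOK X A →
      X ∉ Γ.freeTV → Typing Γ t T → Typing Γ t R →
      TEq T (VType.ssumL (l.map (fun p => (p.1, VType.fa X.1 X.2 p.2)))) →
      TEq R (VType.ssumL (l.map (fun p => (p.1, VType.substT p.2 X A)))) →
      StepOrd Γ t X T R

/-- The relation T ≽^t_{𝒱,Γ} R of Definition 4.3. -/
inductive TOrd {S : Type u} [CommRing S] (Γ : Ctx S) (t : VTerm S) :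
    Set (Bool × ℕ) → VType S → VType S → Prop where
  | step {X : Bool × ℕ} {T R : VType S} : StepOrd Γ t X T R → TOrd Γ t {X} T R
  | trans {V₁ V₂ : Set (Bool × ℕ)} {T R Q : VType S} :
      TOrd Γ t V₁ T R → TOrd Γ t V₂ R Q → TOrd Γ t (V₁ ∪ V₂) T Q
  | ofEq (V : Set (Bool × ℕ)) {T R : VType S} : TEq T R → TOrd Γ t V T R

/-- Inner sum Σⱼ βⱼ·bⱼ of terms, with the convention that the empty sum is 0. -/
def tsumI {S : Type u} : List (S × VTerm S) → VTerm S
  | [] => VTerm.zero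
  | [p] => VTerm.smul p.1 p.2
  | p :: l => VTerm.add (VTerm.smul p.1 p.2) (tsumI l)

/-- Outer sum of a list of terms. -/
def tsumO {S : Type u} : List (VTerm S) → VTerm S
  | [] => VTerm.zero
  | [t] => t
  | t :: l => VTerm.add t (tsumO l)


/-!
Induction on the derivation: only (+_I), (≡), (∀_I) and (∀_E) can type a sum. In the two
∀-cases the type is a combination Σ αᵢ·Uᵢ of unit types with Σ αᵢ·Uᵢ ≡ T + R by induction.
Equivalence preserves the ≡-classes of the prime summands (those that are neither sums nor
scalar multiples), so T and R are themselves equivalent to combinations of the Uᵢ, to which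
the same ∀-rule applies. The equivalence Σ αᵢ·Uᵢ ≡ T + R survives the rule because adding
(resp. instantiating) an outer quantifier on every prime summand is compatible with ≡.
-/

namespace VType

variable {S : Type u}

def IsPrime : VType S → Prop
  | smul _ _ => False
  | add _ _ => False
  | _ => True

theorem IsUnit.isPrime {T : VType S} (h : T.IsUnit) : T.IsPrime := by
  cases h <;> trivial

theorem isPrime_of_mem_map {P : VType S → Prop} {g : VType S → VType S}
    (hg : ∀ U, P U → IsPrime (g U)) {m : List (S × VType S)} (hm : ∀ w ∈ m, P w.2) :
    ∀ w ∈ m.map (fun w => (w.1, g w.2)), IsPrime w.2 := by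
  intro w hw
  obtain ⟨u, hu, rfl⟩ := List.mem_map.mp hw
  exact hg _ (hm u hu)

def mapPrimes (f : VType S → VType S) : VType S → VType S
  | smul a T => smul a (mapPrimes f T)
  | add T R => add (mapPrimes f T) (mapPrimes f R)
  | T => f T

theorem mapPrimes_of_isPrime (f : VType S → VType S) {T : VType S} (h : T.IsPrime) :
    mapPrimes f T = f T := by
  cases T <;> first | rfl | exact h.elim

def elimFa (v : Bool × ℕ) (A : VType S) : VType S → VType S
  | fa b n U => if v = (b, n) then substT U v A else fa b n U
  | T => T

theorem elimFa_fa (v : Bool × ℕ) (A U : VType S) : elimFa v A (fa v.1 v.2 U) = substT U v A :=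
  if_pos rfl

variable [CommRing S]

theorem mapPrimes_ssumL (f : VType S → VType S) :
    ∀ {l : List (S × VType S)}, l ≠ [] → (∀ w ∈ l, IsPrime w.2) →
      mapPrimes f (ssumL l) = ssumL (l.map fun w => (w.1, f w.2))
  | [p], _, hp => by
    simp only [ssumL, mapPrimes, List.map, mapPrimes_of_isPrime f (hp p (by simp))]
  | p :: q :: l, _, hp => by
    show add (smul p.1 (mapPrimes f p.2)) (mapPrimes f (ssumL (q :: l))) = _
    rw [mapPrimes_of_isPrime f (hp p (by simp)),
      mapPrimes_ssumL f (l := q :: l) (by simp) (fun w hw => hp w (by simp [hw]))]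
    rfl

def primeComponents : VType S → List (S × VType S)
  | smul a T => (primeComponents T).map fun p => (a * p.1, p.2)
  | add T R => primeComponents T ++ primeComponents R
  | T => [(1, T)]

def primeClasses : VType S → Set (VType S)
  | smul _ T => primeClasses T
  | add T R => primeClasses T ∪ primeClasses R
  | T => {W | TEq W T}

theorem primeComponents_ne_nil : ∀ T : VType S, primeComponents T ≠ []
  | smul _ T => by simpa [primeComponents] using primeComponents_ne_nil T
  | add T _ => by simp [primeComponents, primeComponents_ne_nil T]
  | uvar _ | gvar _ | arrow _ _ | fa _ _ _ => List.cons_ne_nil _ _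

theorem mem_primeClasses_of_mem_primeComponents :
    ∀ {T : VType S}, ∀ p ∈ primeComponents T, p.2 ∈ primeClasses T
  | smul _ T, p, hp => by
    obtain ⟨q, hq, rfl⟩ := List.mem_map.mp hp
    exact mem_primeClasses_of_mem_primeComponents (T := T) q hq
  | add T R, p, hp => by
    rcases List.mem_append.mp hp with hp | hp
    · exact Or.inl (mem_primeClasses_of_mem_primeComponents p hp)
    · exact Or.inr (mem_primeClasses_of_mem_primeComponents p hp)
  | uvar _, _, hp | gvar _, _, hp | arrow _ _, _, hp | fa _ _ _, _, hp => by
    obtain rfl := List.mem_singleton.mp hp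
    exact TEq.refl _

theorem primeClasses_of_isPrime {T : VType S} (h : T.IsPrime) :
    primeClasses T = {W | TEq W T} := by
  cases T <;> first | rfl | exact h.elim

theorem primeClasses_ssumL : ∀ {l : List (S × VType S)}, l ≠ [] → (∀ w ∈ l, IsPrime w.2) →
    primeClasses (ssumL l) = {W | ∃ u ∈ l, TEq W u.2}
  | [p], _, hp => by
    simp only [ssumL, primeClasses, primeClasses_of_isPrime (hp p (by simp)),
      List.mem_singleton, exists_eq_left]
  | p :: q :: l, _, hp => by
    show primeClasses p.2 ∪ primeClasses (ssumL (q :: l)) = _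
    rw [primeClasses_of_isPrime (hp p (by simp)),
      primeClasses_ssumL (l := q :: l) (by simp) (fun w hw => hp w (by simp [hw]))]
    ext W
    simp

end VType

open VType

section

variable {S : Type u} [CommRing S]

theorem TEq.primeClasses_eq {T R : VType S} (h : TEq T R) : primeClasses T = primeClasses R := by
  induction h with
  | refl | oneSmul | smulSmul | smulAdd => rfl
  | symm _ ih => exact ih.symm
  | trans _ _ ih₁ ih₂ => exact ih₁.trans ih₂
  | addSmul => exact Set.union_self _
  | comm => exact Set.union_comm _ _
  | assoc => exact (Set.union_assoc _ _ _).symm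
  | arrowCong h₁ h₂ =>
    ext W
    exact ⟨fun hW => hW.trans (.arrowCong h₁ h₂), fun hW => hW.trans (TEq.arrowCong h₁ h₂).symm⟩
  | faCong b n h =>
    ext W
    exact ⟨fun hW => hW.trans (.faCong b n h), fun hW => hW.trans (TEq.faCong b n h).symm⟩
  | smulCong _ _ ih => exact ih
  | addCong _ _ ih₁ ih₂ => exact congrArg₂ (· ∪ ·) ih₁ ih₂

def PrimeCongr (f : VType S → VType S) : Prop :=
  (∀ {U V T R : VType S}, TEq U V → TEq T R → TEq (f (arrow U T)) (f (arrow V R))) ∧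
    ∀ b n {T R : VType S}, TEq T R → TEq (f (fa b n T)) (f (fa b n R))

theorem TEq.mapPrimes {f : VType S → VType S} (hf : PrimeCongr f) {T R : VType S}
    (h : TEq T R) : TEq (T.mapPrimes f) (R.mapPrimes f) := by
  induction h with
  | refl => exact .refl _
  | symm _ ih => exact ih.symm
  | trans _ _ ih₁ ih₂ => exact ih₁.trans ih₂
  | oneSmul => exact .oneSmul _
  | smulSmul => exact .smulSmul _ _ _
  | smulAdd => exact .smulAdd _ _ _
  | addSmul => exact .addSmul _ _ _
  | comm => exact .comm _ _
  | assoc => exact .assoc _ _ _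
  | arrowCong h₁ h₂ => exact hf.1 h₁ h₂
  | faCong b n h => exact hf.2 b n h
  | smulCong a _ ih => exact .smulCong a ih
  | addCong _ _ ih₁ ih₂ => exact .addCong ih₁ ih₂

theorem TEq.substT (v : Bool × ℕ) (A : VType S) {T R : VType S} (h : TEq T R) :
    TEq (T.substT v A) (R.substT v A) := by
  induction h with
  | refl => exact .refl _
  | symm _ ih => exact ih.symm
  | trans _ _ ih₁ ih₂ => exact ih₁.trans ih₂
  | oneSmul => exact .oneSmul _
  | smulSmul => exact .smulSmul _ _ _
  | smulAdd => exact .smulAdd _ _ _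
  | addSmul => exact .addSmul _ _ _
  | comm => exact .comm _ _
  | assoc => exact .assoc _ _ _
  | arrowCong _ _ ih₁ ih₂ => exact .arrowCong ih₁ ih₂
  | faCong b n h ih =>
    simp only [VType.substT]
    split
    · exact .faCong b n h
    · exact .faCong b n ih
  | smulCong a _ ih => exact .smulCong a ih
  | addCong _ _ ih₁ ih₂ => exact .addCong ih₁ ih₂

theorem TEq.ssumL_append : ∀ {l m : List (S × VType S)}, l ≠ [] → m ≠ [] →
    TEq (ssumL (l ++ m)) (add (ssumL l) (ssumL m))
  | [_], _ :: _, _, _ => .refl _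
  | p :: q :: l, m, _, hm =>
    (TEq.addCong (.refl _) (ssumL_append (l := q :: l) (by simp) hm)).trans (.assoc _ _ _)

theorem TEq.smul_ssumL (a : S) : ∀ {l : List (S × VType S)}, l ≠ [] →
    TEq (smul a (ssumL l)) (ssumL (l.map fun p => (a * p.1, p.2)))
  | [p], _ => .smulSmul a p.1 p.2
  | p :: q :: l, _ =>
    (TEq.smulAdd a _ _).symm.trans (.addCong (.smulSmul a p.1 p.2) (smul_ssumL a (by simp)))

theorem TEq.ssumL_primeComponents : ∀ T : VType S, TEq T (ssumL (primeComponents T))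
  | smul a T => (TEq.smulCong a (ssumL_primeComponents T)).trans
      (.smul_ssumL a (primeComponents_ne_nil T))
  | add T R => (TEq.addCong (ssumL_primeComponents T) (ssumL_primeComponents R)).trans
      (TEq.ssumL_append (primeComponents_ne_nil T) (primeComponents_ne_nil R)).symm
  | uvar _ | gvar _ | arrow _ _ | fa _ _ _ => (TEq.oneSmul _).symm

theorem primeCongr_fa (v : Bool × ℕ) : PrimeCongr (fa v.1 v.2 : VType S → VType S) :=
  ⟨fun h₁ h₂ => .faCong _ _ (.arrowCong h₁ h₂), fun b n {_ _} h => .faCong _ _ (.faCong b n h)⟩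

theorem primeCongr_elimFa (v : Bool × ℕ) (A : VType S) : PrimeCongr (elimFa v A) := by
  refine ⟨fun h₁ h₂ => .arrowCong h₁ h₂, fun b n {T R} h => ?_⟩
  simp only [elimFa]
  split
  · exact h.substT v A
  · exact .faCong b n h

theorem TEq.ssumL_map {f : VType S → VType S} (hf : PrimeCongr f) {l m : List (S × VType S)}
    (hl : l ≠ []) (hm : m ≠ []) (hlp : ∀ w ∈ l, IsPrime w.2) (hmp : ∀ w ∈ m, IsPrime w.2)
    (h : TEq (ssumL l) (ssumL m)) :
    TEq (ssumL (l.map fun w => (w.1, f w.2))) (ssumL (m.map fun w => (w.1, f w.2))) := by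
  rw [← mapPrimes_ssumL f hl hlp, ← mapPrimes_ssumL f hm hmp]
  exact h.mapPrimes hf

theorem exists_teq_ssumL_of_forall_teq {P : VType S → Prop} {g : VType S → VType S} :
    ∀ {d : List (S × VType S)}, (∀ p ∈ d, ∃ U, P U ∧ TEq p.2 (g U)) →
      ∃ l : List (S × VType S), l.length = d.length ∧ (∀ q ∈ l, P q.2) ∧
        TEq (ssumL d) (ssumL (l.map fun q => (q.1, g q.2)))
  | [], _ => ⟨[], rfl, by simp, .refl _⟩
  | [p], h => by
    obtain ⟨U, hU, hpU⟩ := h p (by simp)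
    exact ⟨[(p.1, U)], rfl, by simpa using hU, .smulCong p.1 hpU⟩
  | p :: p' :: d, h => by
    obtain ⟨U, hU, hpU⟩ := h p (by simp)
    obtain ⟨l, hlen, hP, hE⟩ :=
      exists_teq_ssumL_of_forall_teq (d := p' :: d) fun p hp => h p (by simp [hp])
    obtain ⟨q, l, rfl⟩ := List.exists_cons_of_length_eq_add_one hlen
    exact ⟨(p.1, U) :: q :: l, by simpa using hlen, by simpa [hU] using hP,
      .addCong (.smulCong p.1 hpU) hE⟩

theorem exists_teq_ssumL_of_primeClasses {P : VType S → Prop} {g : VType S → VType S}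
    {T : VType S} (h : ∀ W ∈ primeClasses T, ∃ U, P U ∧ TEq W (g U)) :
    ∃ l : List (S × VType S), l ≠ [] ∧ (∀ q ∈ l, P q.2) ∧
      TEq T (ssumL (l.map fun q => (q.1, g q.2))) := by
  obtain ⟨l, hlen, hP, hE⟩ := exists_teq_ssumL_of_forall_teq (d := primeComponents T)
    fun p hp => h p.2 (mem_primeClasses_of_mem_primeComponents p hp)
  refine ⟨l, ?_, hP, (TEq.ssumL_primeComponents T).trans hE⟩
  rintro rfl
  exact primeComponents_ne_nil T (List.length_eq_zero_iff.mp hlen.symm)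

theorem exists_split_of_teq_add {P : VType S → Prop} {g : VType S → VType S}
    (hg : ∀ U, P U → IsPrime (g U)) {l : List (S × VType S)} (hl : l ≠ [])
    (hP : ∀ w ∈ l, P w.2) {T R : VType S}
    (hE : TEq (ssumL (l.map fun w => (w.1, g w.2))) (add T R)) :
    ∃ lT lR : List (S × VType S), lT ≠ [] ∧ lR ≠ [] ∧ (∀ q ∈ lT, P q.2) ∧ (∀ q ∈ lR, P q.2) ∧
      TEq T (ssumL (lT.map fun q => (q.1, g q.2))) ∧
      TEq R (ssumL (lR.map fun q => (q.1, g q.2))) := by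
  have hclasses : ∀ W ∈ primeClasses (add T R), ∃ U, P U ∧ TEq W (g U) := by
    rw [← hE.primeClasses_eq,
      primeClasses_ssumL (by simpa using hl) (isPrime_of_mem_map hg hP)]
    rintro W ⟨_, hu, hW⟩
    obtain ⟨w, hw, rfl⟩ := List.mem_map.mp hu
    exact ⟨w.2, hP w hw, hW⟩
  obtain ⟨lT, hlT, hPT, hT⟩ := exists_teq_ssumL_of_primeClasses fun W hW => hclasses W (.inl hW)
  obtain ⟨lR, hlR, hPR, hR⟩ := exists_teq_ssumL_of_primeClasses fun W hW => hclasses W (.inr hW)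
  exact ⟨lT, lR, hlT, hlR, hPT, hPR, hT, hR⟩

/-- A typing rule that acts on unit combinations summand by summand, through a map which
extends to a `≡`-compatible map on all types, preserves the splitting of a sum. -/
theorem Typing.exists_split_of_primewise {Γ : Ctx S} {t r : VTerm S} {P : VType S → Prop}
    {g f h : VType S → VType S} (hg : ∀ U, P U → IsPrime (g U)) (hf : PrimeCongr f)
    (hfg : ∀ U, P U → f (g U) = h U)
    (rule : ∀ {s : VTerm S} {q : S × VType S} {qs : List (S × VType S)},
      (∀ w ∈ q :: qs, P w.2) → Typing Γ s (ssumL ((q :: qs).map fun w => (w.1, g w.2))) →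
        Typing Γ s (ssumL ((q :: qs).map fun w => (w.1, h w.2))))
    {l : List (S × VType S)} (hl : l ≠ []) (hP : ∀ w ∈ l, P w.2) {T R : VType S}
    (hE : TEq (ssumL (l.map fun w => (w.1, g w.2))) (add T R))
    (ht : Typing Γ t T) (hr : Typing Γ r R) :
    ∃ T' R', TEq (ssumL (l.map fun w => (w.1, h w.2))) (add T' R') ∧
      Typing Γ t T' ∧ Typing Γ r R' := by
  obtain ⟨lT, lR, hlT, hlR, hPT, hPR, hT, hR⟩ := exists_split_of_teq_add hg hl hP hE
  obtain ⟨q, qs, rfl⟩ := List.exists_cons_of_ne_nil hlT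
  obtain ⟨q', qs', rfl⟩ := List.exists_cons_of_ne_nil hlR
  refine ⟨_, _, ?_, rule hPT (ht.equiv hT), rule hPR (hr.equiv hR)⟩
  have hmap : ∀ m : List (S × VType S), (∀ w ∈ m, P w.2) →
      (m.map fun w => (w.1, g w.2)).map (fun w => (w.1, f w.2)) = m.map fun w => (w.1, h w.2) :=
    fun m hm => by
      rw [List.map_map]
      exact List.map_congr_left fun w hw => by simp [hfg w.2 (hm w hw)]
  have hPTR : ∀ w ∈ q :: qs ++ q' :: qs', P w.2 := by
    simpa only [List.mem_append, or_imp, forall_and] using ⟨hPT, hPR⟩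
  have hsplit := (hE.trans (.addCong hT hR)).trans (TEq.ssumL_append (by simp) (by simp)).symm
  rw [← List.map_append] at hsplit
  have := hsplit.ssumL_map hf (by simpa using hl) (by simp) (isPrime_of_mem_map hg hP)
    (isPrime_of_mem_map hg hPTR)
  rw [hmap l hP, hmap _ hPTR, List.map_append] at this
  exact this.trans (TEq.ssumL_append (by simp) (by simp))

end

/-- Sum generation lemma. -/
theorem sums_generation {S : Type} [CommRing S] {Γ : Ctx S} {t r : VTerm S}
    {Sty : VType S} (h : Typing Γ (VTerm.add t r) Sty) :
    ∃ T R : VType S, TEq Sty (VType.add T R) ∧ Typing Γ t T ∧ Typing Γ r R := by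
  generalize hs : VTerm.add t r = s at h
  induction h generalizing t r with
  | addI ht hr =>
    cases hs
    exact ⟨_, _, .refl _, ht, hr⟩
  | equiv _ hTR ih =>
    obtain ⟨T, R, hE, ht, hr⟩ := ih hs
    exact ⟨T, R, hTR.symm.trans hE, ht, hr⟩
  | faI v p ps hv hu _ ih =>
    obtain ⟨T, R, hE, ht, hr⟩ := ih hs
    exact Typing.exists_split_of_primewise (g := id) (fun _ hU => hU.isPrime) (primeCongr_fa v)
      (fun _ _ => rfl) (fun hq hty => .faI v _ _ hv hq (by simpa using hty))
      (List.cons_ne_nil p ps) hu (by simpa using hE) ht hr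
  | faE v A p ps hk hu _ ih =>
    obtain ⟨T, R, hE, ht, hr⟩ := ih hs
    exact Typing.exists_split_of_primewise (g := fa v.1 v.2) (fun _ _ => trivial)
      (primeCongr_elimFa v A) (fun U _ => elimFa_fa v A U) (.faE v A _ _ hk)
      (List.cons_ne_nil p ps) hu hE ht hr
  | _ => cases hs
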